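/- For each fixed μ ∈ ℝ, lim_{v→0} Z_v(μ) = Φ(μ), i.e., the Rayleigh-normal distribution functions converge pointwise to the standard normal CDF as v → 0. -/

import Mathlib

/-!
Write `Φ` for the standard normal distribution function and `F_v`, `N_v` for the distribution
function and density of `𝒩(μ, v)`. For an admissible `A` and any cut point `c`, Cauchy–Schwarz on
`(-∞, c]` and on `(c, ∞)` gives
`∫ √(A' N_v) ≤ √(A c) √(F_v c) + √(1 - A c) √(1 - F_v c) ≤ √(F_v c) + √(1 - Φ c)`.
Conversely `A = 1 - (1 - Φ) (1 - F_v)` is admissible with `A' ≥ (1 - Φ) N_v`, so the supremum is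
at least `√(1 - Φ c) F_v c`. By Chebyshev's inequality `F_v c → 0` for `c < μ` and `F_v c → 1`
for `c > μ` as `v → 0`, so by continuity of `Φ` the supremum tends to `√(1 - Φ μ)`, and
`Z_v(μ) = 1 - sup² → Φ μ`.
-/

noncomputable def normalPDF (μ v x : ℝ) : ℝ :=
  (Real.sqrt (2 * Real.pi * v))⁻¹ * Real.exp (-(x - μ)^2 / (2 * v))

noncomputable def normalCDF (μ v x : ℝ) : ℝ :=
  ∫ t in Set.Iio x, normalPDF μ v t

/-- The set of fidelities appearing in the definition of the Rayleigh-normal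
distribution function: `A` runs over continuously differentiable monotone increasing
functions with `Φ ≤ A ≤ 1`. -/
noncomputable def RNFidelities (μ v : ℝ) : Set ℝ :=
  {r | ∃ A : ℝ → ℝ, ContDiff ℝ 1 A ∧ Monotone A ∧
    (∀ x, normalCDF 0 1 x ≤ A x) ∧ (∀ x, A x ≤ 1) ∧
    r = ∫ x : ℝ, Real.sqrt (deriv A x * normalPDF μ v x)}

/-- The Rayleigh-normal distribution function `Z_v(μ)`. -/
noncomputable def RayleighNormal (v μ : ℝ) : ℝ :=
  1 - (sSup (RNFidelities μ v))^2

open MeasureTheory ProbabilityTheory Set Filter Topology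
open scoped NNReal

namespace MeasureTheory

variable {α : Type*} [MeasurableSpace α] {ν : Measure α} {f g : α → ℝ}

lemma Integrable.memLp_two_sqrt (hf : Integrable f ν) (hf0 : 0 ≤ f) :
    MemLp (fun x => √(f x)) 2 ν :=
  (memLp_two_iff_integrable_sq (Real.continuous_sqrt.comp_aestronglyMeasurable hf.1)).2 <|
    hf.congr (ae_of_all _ fun x => (Real.sq_sqrt (hf0 x)).symm)

lemma Integrable.sqrt_mul (hf : Integrable f ν) (hg : Integrable g ν) (hf0 : 0 ≤ f)
    (hg0 : 0 ≤ g) : Integrable (fun x => √(f x * g x)) ν := by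
  simp_rw [Real.sqrt_mul (hf0 _)]
  exact (hf.memLp_two_sqrt hf0).integrable_mul (hg.memLp_two_sqrt hg0)

lemma integral_sqrt_mul_le (hf : Integrable f ν) (hg : Integrable g ν) (hf0 : 0 ≤ f)
    (hg0 : 0 ≤ g) : ∫ x, √(f x * g x) ∂ν ≤ √(∫ x, f x ∂ν) * √(∫ x, g x ∂ν) := by
  have h := integral_mul_le_Lp_mul_Lq_of_nonneg Real.HolderConjugate.two_two
    (ae_of_all _ fun x => Real.sqrt_nonneg (f x)) (ae_of_all _ fun x => Real.sqrt_nonneg (g x))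
    (by simpa using hf.memLp_two_sqrt hf0) (by simpa using hg.memLp_two_sqrt hg0)
  simp only [Real.rpow_two, Real.sq_sqrt (hf0 _), Real.sq_sqrt (hg0 _),
    ← Real.sqrt_eq_rpow] at h
  simpa only [Real.sqrt_mul (hf0 _)] using h

end MeasureTheory

section MonotoneDeriv

variable {A : ℝ → ℝ}

lemma integrableOn_Iic_deriv_of_monotone (hA : ContDiff ℝ 1 A) (hm : Monotone A)
    (hb : BddBelow (range A)) (c : ℝ) : IntegrableOn (deriv A) (Iic c) := by
  obtain ⟨a, ha⟩ := hb
  have hdC := hA.continuous_deriv le_rfl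
  refine integrableOn_Iic_of_intervalIntegral_norm_bounded (A c - a) c (l := atBot) (a := id)
    (fun i => hdC.integrableOn_Ioc) tendsto_id (Eventually.of_forall fun i => ?_)
  rw [id_eq,
    intervalIntegral.integral_congr (g := deriv A) fun x _ => Real.norm_of_nonneg hm.deriv_nonneg,
    intervalIntegral.integral_deriv_eq_sub (fun x _ => hA.differentiable one_ne_zero x)
      (hdC.intervalIntegrable _ _)]
  linarith [ha (mem_range_self i)]

lemma integrableOn_Ioi_deriv_of_monotone (hA : ContDiff ℝ 1 A) (hm : Monotone A)
    (hb : BddAbove (range A)) (c : ℝ) : IntegrableOn (deriv A) (Ioi c) :=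
  integrableOn_Ioi_deriv_of_nonneg' (fun x _ => (hA.differentiable one_ne_zero x).hasDerivAt)
    (fun _ _ => hm.deriv_nonneg) (tendsto_atTop_ciSup hm hb)

lemma integrable_deriv_of_monotone (hA : ContDiff ℝ 1 A) (hm : Monotone A)
    (hb : BddBelow (range A)) (hb' : BddAbove (range A)) : Integrable (deriv A) := by
  simpa [Iic_union_Ioi] using
    (integrableOn_Iic_deriv_of_monotone hA hm hb 0).union
      (integrableOn_Ioi_deriv_of_monotone hA hm hb' 0)

lemma setIntegral_Iic_deriv_le_of_monotone (hA : ContDiff ℝ 1 A) (hm : Monotone A) {a : ℝ}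
    (ha : ∀ x, a ≤ A x) (c : ℝ) : ∫ x in Iic c, deriv A x ≤ A c - a := by
  have hb : BddBelow (range A) := ⟨a, forall_mem_range.2 ha⟩
  rw [integral_Iic_of_hasDerivAt_of_tendsto'
    (fun x _ => (hA.differentiable one_ne_zero x).hasDerivAt)
    (integrableOn_Iic_deriv_of_monotone hA hm hb c) (tendsto_atBot_ciInf hm hb)]
  linarith [le_ciInf ha]

lemma setIntegral_Ioi_deriv_le_of_monotone (hA : ContDiff ℝ 1 A) (hm : Monotone A) {b : ℝ}
    (hb : ∀ x, A x ≤ b) (c : ℝ) : ∫ x in Ioi c, deriv A x ≤ b - A c := by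
  have hb' : BddAbove (range A) := ⟨b, forall_mem_range.2 hb⟩
  rw [integral_Ioi_of_hasDerivAt_of_tendsto'
    (fun x _ => (hA.differentiable one_ne_zero x).hasDerivAt)
    (integrableOn_Ioi_deriv_of_monotone hA hm hb' c) (tendsto_atTop_ciSup hm hb')]
  linarith [ciSup_le hb]

lemma integral_sqrt_deriv_mul_le (hA : ContDiff ℝ 1 A) (hm : Monotone A) (h0 : ∀ x, 0 ≤ A x)
    (h1 : ∀ x, A x ≤ 1) {p : ℝ → ℝ} (hp : Integrable p) (hp0 : 0 ≤ p) (c : ℝ) :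
    ∫ x, √(deriv A x * p x) ≤
      √(A c) * √(∫ x in Iic c, p x) + √(1 - A c) * √(∫ x in Ioi c, p x) := by
  have hA' : Integrable (deriv A) := integrable_deriv_of_monotone hA hm
    ⟨0, forall_mem_range.2 h0⟩ ⟨1, forall_mem_range.2 h1⟩
  have hd0 : 0 ≤ deriv A := fun _ => hm.deriv_nonneg
  rw [← integral_add_compl measurableSet_Iic (hA'.sqrt_mul hp hd0 hp0), compl_Iic]
  gcongr ?_ + ?_
  · refine (integral_sqrt_mul_le hA'.integrableOn hp.integrableOn hd0 hp0).trans ?_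
    gcongr
    simpa using setIntegral_Iic_deriv_le_of_monotone hA hm h0 c
  · refine (integral_sqrt_mul_le hA'.integrableOn hp.integrableOn hd0 hp0).trans ?_
    gcongr
    exact setIntegral_Ioi_deriv_le_of_monotone hA hm h1 c

end MonotoneDeriv

section Gaussian

variable (m : ℝ) {v : ℝ}

lemma normalPDF_nonneg (v : ℝ) : 0 ≤ normalPDF m v := fun _ => by
  unfold normalPDF; positivity

lemma continuous_normalPDF (v : ℝ) : Continuous (normalPDF m v) := by
  unfold normalPDF; fun_prop

lemma normalPDF_eq_gaussianPDFReal (hv : 0 ≤ v) :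
    normalPDF m v = gaussianPDFReal m v.toNNReal := by
  ext x
  simp only [gaussianPDFReal, Real.coe_toNNReal _ hv]
  rfl

lemma integrable_normalPDF (hv : 0 < v) : Integrable (normalPDF m v) := by
  rw [normalPDF_eq_gaussianPDFReal m hv.le]
  exact integrable_gaussianPDFReal m v.toNNReal

lemma setIntegral_normalPDF (hv : 0 < v) (s : Set ℝ) :
    ∫ x in s, normalPDF m v x = (gaussianReal m v.toNNReal).real s := by
  rw [measureReal_def, gaussianReal_apply_eq_integral m (by simpa using hv),
    ← normalPDF_eq_gaussianPDFReal m hv.le,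
    ENNReal.toReal_ofReal (setIntegral_nonneg_of_ae (ae_of_all _ (normalPDF_nonneg m v)))]

lemma normalCDF_nonneg (v x : ℝ) : 0 ≤ normalCDF m v x :=
  setIntegral_nonneg measurableSet_Iio fun t _ => normalPDF_nonneg m v t

lemma normalCDF_le_one (hv : 0 < v) (x : ℝ) : normalCDF m v x ≤ 1 := by
  rw [normalCDF, setIntegral_normalPDF m hv]
  exact measureReal_le_one

lemma hasDerivAt_normalCDF (hv : 0 < v) (x : ℝ) :
    HasDerivAt (normalCDF m v) (normalPDF m v x) x := by
  have hint := integrable_normalPDF m hv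
  have hcont := continuous_normalPDF m v
  have hsplit : normalCDF m v =
      fun u => (∫ t in Iic 0, normalPDF m v t) + ∫ t in 0..u, normalPDF m v t := by
    funext u
    rw [normalCDF, ← integral_Iic_eq_integral_Iio,
      ← intervalIntegral.integral_Iic_sub_Iic hint.integrableOn hint.integrableOn]
    ring
  rw [hsplit]
  exact (intervalIntegral.integral_hasDerivAt_right (hcont.intervalIntegrable _ _)
    (hcont.stronglyMeasurableAtFilter _ _) hcont.continuousAt).const_add _

lemma contDiff_normalCDF (hv : 0 < v) : ContDiff ℝ 1 (normalCDF m v) := by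
  rw [contDiff_one_iff_deriv]
  refine ⟨fun x => (hasDerivAt_normalCDF m hv x).differentiableAt, ?_⟩
  rw [funext fun x => (hasDerivAt_normalCDF m hv x).deriv]
  exact continuous_normalPDF m v

lemma monotone_normalCDF (hv : 0 < v) : Monotone (normalCDF m v) :=
  monotone_of_deriv_nonneg (contDiff_normalCDF m hv).differentiable_one fun x => by
    rw [(hasDerivAt_normalCDF m hv x).deriv]
    exact normalPDF_nonneg m v x

lemma gaussianReal_real_abs_sub_ge_le (v : ℝ≥0) {δ : ℝ} (hδ : 0 < δ) :
    (gaussianReal m v).real {x | δ ≤ |x - m|} ≤ v / δ ^ 2 := by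
  have h := meas_ge_le_variance_div_sq (memLp_id_gaussianReal (μ := m) (v := v) 2) hδ
  simp only [integral_id_gaussianReal, variance_id_gaussianReal, id] at h
  exact ENNReal.toReal_le_of_le_ofReal (by positivity) h

lemma normalCDF_le_of_lt (hv : 0 < v) {c : ℝ} (hc : c < m) :
    normalCDF m v c ≤ v / (m - c) ^ 2 := calc
  normalCDF m v c = (gaussianReal m v.toNNReal).real (Iio c) := setIntegral_normalPDF m hv _
  _ ≤ (gaussianReal m v.toNNReal).real {x | m - c ≤ |x - m|} :=
    measureReal_mono fun x (hx : x < c) => by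
      rw [mem_ofPred_eq, abs_sub_comm]
      exact (by linarith : m - c ≤ m - x).trans (le_abs_self _)
  _ ≤ v / (m - c) ^ 2 := by
    simpa [hv.le] using gaussianReal_real_abs_sub_ge_le m v.toNNReal (sub_pos.2 hc)

lemma one_sub_normalCDF_le_of_gt (hv : 0 < v) {c : ℝ} (hc : m < c) :
    1 - normalCDF m v c ≤ v / (c - m) ^ 2 := calc
  1 - normalCDF m v c = (gaussianReal m v.toNNReal).real (Ici c) := by
    rw [normalCDF, setIntegral_normalPDF m hv, ← probReal_compl_eq_one_sub measurableSet_Iio,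
      compl_Iio]
  _ ≤ (gaussianReal m v.toNNReal).real {x | c - m ≤ |x - m|} :=
    measureReal_mono fun x (hx : c ≤ x) => (by linarith : c - m ≤ x - m).trans (le_abs_self _)
  _ ≤ v / (c - m) ^ 2 := by
    simpa [hv.le] using gaussianReal_real_abs_sub_ge_le m v.toNNReal (sub_pos.2 hc)

lemma tendsto_div_const_nhdsGT_zero (a : ℝ) :
    Tendsto (fun v : ℝ => v / a) (𝓝[>] 0) (𝓝 0) := by
  simpa using ((tendsto_id (x := 𝓝 (0 : ℝ))).div_const a).mono_left nhdsWithin_le_nhds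

lemma tendsto_normalCDF_of_lt {c : ℝ} (hc : c < m) :
    Tendsto (fun v => normalCDF m v c) (𝓝[>] 0) (𝓝 0) := by
  refine tendsto_of_tendsto_of_tendsto_of_le_of_le' tendsto_const_nhds
    (tendsto_div_const_nhdsGT_zero ((m - c) ^ 2))
    (Eventually.of_forall fun v => normalCDF_nonneg m v c) ?_
  filter_upwards [self_mem_nhdsWithin] with v hv using normalCDF_le_of_lt m hv hc

lemma tendsto_normalCDF_of_gt {c : ℝ} (hc : m < c) :
    Tendsto (fun v => normalCDF m v c) (𝓝[>] 0) (𝓝 1) := by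
  have hlow := (tendsto_div_const_nhdsGT_zero ((c - m) ^ 2)).const_sub 1
  rw [sub_zero] at hlow
  refine tendsto_of_tendsto_of_tendsto_of_le_of_le' hlow tendsto_const_nhds ?_ ?_
  all_goals filter_upwards [self_mem_nhdsWithin] with v hv
  · linarith [one_sub_normalCDF_le_of_gt m hv hc]
  · exact normalCDF_le_one m hv c

end Gaussian

section RayleighNormal

variable {μ v : ℝ}

lemma le_of_mem_RNFidelities (hv : 0 < v) {r : ℝ} (hr : r ∈ RNFidelities μ v) (c : ℝ) :
    r ≤ √(normalCDF μ v c) + √(1 - normalCDF 0 1 c) := by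
  obtain ⟨A, hA, hm, hΦA, hA1, rfl⟩ := hr
  have hA0 : ∀ x, 0 ≤ A x := fun x => (normalCDF_nonneg 0 1 x).trans (hΦA x)
  calc ∫ x, √(deriv A x * normalPDF μ v x)
      ≤ √(A c) * √(∫ x in Iic c, normalPDF μ v x) +
          √(1 - A c) * √(∫ x in Ioi c, normalPDF μ v x) :=
        integral_sqrt_deriv_mul_le hA hm hA0 hA1 (integrable_normalPDF μ hv)
          (normalPDF_nonneg μ v) c
    _ ≤ 1 * √(normalCDF μ v c) + √(1 - normalCDF 0 1 c) * 1 := by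
      have hF : ∫ x in Iic c, normalPDF μ v x = normalCDF μ v c := integral_Iic_eq_integral_Iio
      rw [hF, setIntegral_normalPDF μ hv (Ioi c)]
      gcongr
      · exact Real.sqrt_le_one.2 (hA1 c)
      · exact hΦA c
      · exact Real.sqrt_le_one.2 measureReal_le_one
    _ = √(normalCDF μ v c) + √(1 - normalCDF 0 1 c) := by ring

lemma exists_admissible_deriv_ge (hv : 0 < v) :
    ∃ A : ℝ → ℝ, ContDiff ℝ 1 A ∧ Monotone A ∧ (∀ x, normalCDF 0 1 x ≤ A x) ∧ (∀ x, A x ≤ 1) ∧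
      ∀ x, (1 - normalCDF 0 1 x) * normalPDF μ v x ≤ deriv A x := by
  set Φ := normalCDF 0 1
  set F := normalCDF μ v
  have hΦ1 : ∀ x, Φ x ≤ 1 := normalCDF_le_one 0 one_pos
  have hF0 : ∀ x, 0 ≤ F x := normalCDF_nonneg μ v
  have hF1 : ∀ x, F x ≤ 1 := normalCDF_le_one μ hv
  set A := fun x => 1 - (1 - Φ x) * (1 - F x)
  have hA : ∀ x, HasDerivAt A (normalPDF 0 1 x * (1 - F x) + (1 - Φ x) * normalPDF μ v x) x :=
    fun x => ((((hasDerivAt_normalCDF 0 one_pos x).const_sub 1).mul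
      ((hasDerivAt_normalCDF μ hv x).const_sub 1)).const_sub 1).congr_deriv (by ring)
  have hA' : ∀ x, (1 - Φ x) * normalPDF μ v x ≤ deriv A x := fun x => by
    rw [(hA x).deriv]
    linarith [mul_nonneg (normalPDF_nonneg 0 1 x) (sub_nonneg.2 (hF1 x))]
  refine ⟨A, ?_, ?_, fun x => ?_, fun x => ?_, hA'⟩
  · exact contDiff_const.sub ((contDiff_const.sub (contDiff_normalCDF 0 one_pos)).mul
      (contDiff_const.sub (contDiff_normalCDF μ hv)))
  · exact monotone_of_deriv_nonneg (fun x => (hA x).differentiableAt) fun x =>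
      (mul_nonneg (sub_nonneg.2 (hΦ1 x)) (normalPDF_nonneg μ v x)).trans (hA' x)
  · nlinarith [mul_nonneg (sub_nonneg.2 (hΦ1 x)) (hF0 x)]
  · nlinarith [mul_nonneg (sub_nonneg.2 (hΦ1 x)) (sub_nonneg.2 (hF1 x))]

lemma exists_mem_RNFidelities_ge (hv : 0 < v) (c : ℝ) :
    ∃ r ∈ RNFidelities μ v, √(1 - normalCDF 0 1 c) * normalCDF μ v c ≤ r := by
  obtain ⟨A, hAC, hm, hΦA, hA1, hA'⟩ := exists_admissible_deriv_ge (μ := μ) hv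
  refine ⟨_, ⟨A, hAC, hm, hΦA, hA1, rfl⟩, ?_⟩
  set Φ := normalCDF 0 1
  set N := normalPDF μ v
  have hint : Integrable fun x => √(deriv A x * N x) :=
    (integrable_deriv_of_monotone hAC hm
        ⟨0, forall_mem_range.2 fun x => (normalCDF_nonneg 0 1 x).trans (hΦA x)⟩
        ⟨1, forall_mem_range.2 hA1⟩).sqrt_mul
      (integrable_normalPDF μ hv) (fun _ => hm.deriv_nonneg) (normalPDF_nonneg μ v)
  have hpt : ∀ x ∈ Iic c, √(1 - Φ c) * N x ≤ √(deriv A x * N x) := fun x hx => by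
    have hN := normalPDF_nonneg μ v x
    calc √(1 - Φ c) * N x ≤ √(1 - Φ x) * √(N x * N x) := by
          rw [Real.sqrt_mul_self hN]
          gcongr
          exact monotone_normalCDF 0 one_pos hx
      _ = √((1 - Φ x) * N x * N x) := by
          rw [mul_assoc, Real.sqrt_mul (sub_nonneg.2 (normalCDF_le_one 0 one_pos x))]
      _ ≤ √(deriv A x * N x) := by gcongr; exact hA' x
  calc √(1 - Φ c) * normalCDF μ v c = ∫ x in Iic c, √(1 - Φ c) * N x := by
        rw [integral_const_mul, integral_Iic_eq_integral_Iio]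
        rfl
    _ ≤ ∫ x in Iic c, √(deriv A x * N x) :=
        setIntegral_mono_on ((integrable_normalPDF μ hv).integrableOn.const_mul _)
          hint.integrableOn measurableSet_Iic hpt
    _ ≤ ∫ x, √(deriv A x * N x) :=
        setIntegral_le_integral hint (ae_of_all _ fun _ => Real.sqrt_nonneg _)

lemma tendsto_sSup_RNFidelities (μ : ℝ) :
    Tendsto (fun v => sSup (RNFidelities μ v)) (𝓝[>] 0) (𝓝 √(1 - normalCDF 0 1 μ)) := by
  set g := fun c => √(1 - normalCDF 0 1 c)
  have hg : Continuous g :=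
    (continuous_const.sub (contDiff_normalCDF 0 one_pos).continuous).sqrt
  rw [tendsto_order]
  constructor
  · intro a ha
    obtain ⟨c, hac, hμc⟩ : ∃ c, a < g c ∧ μ < c :=
      (((hg.tendsto μ).eventually (lt_mem_nhds ha)).filter_mono nhdsWithin_le_nhds |>.and
        (self_mem_nhdsWithin (s := Ioi μ))).exists
    have hlim : Tendsto (fun v => g c * normalCDF μ v c) (𝓝[>] 0) (𝓝 (g c)) := by
      simpa using (tendsto_normalCDF_of_gt μ hμc).const_mul (g c)
    filter_upwards [hlim.eventually (lt_mem_nhds hac), self_mem_nhdsWithin] with v hlt hv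
    obtain ⟨r, hr, hle⟩ := exists_mem_RNFidelities_ge hv c
    exact hlt.trans_le (hle.trans
      (le_csSup ⟨_, fun r hr => le_of_mem_RNFidelities hv hr c⟩ hr))
  · intro b hb
    obtain ⟨c, hcb, hcμ⟩ : ∃ c, g c < b ∧ c < μ :=
      (((hg.tendsto μ).eventually (gt_mem_nhds hb)).filter_mono nhdsWithin_le_nhds |>.and
        (self_mem_nhdsWithin (s := Iio μ))).exists
    have hlim : Tendsto (fun v => √(normalCDF μ v c) + g c) (𝓝[>] 0) (𝓝 (g c)) := by
      simpa using (tendsto_normalCDF_of_lt μ hcμ).sqrt.add_const (g c)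
    filter_upwards [hlim.eventually (gt_mem_nhds hcb), self_mem_nhdsWithin] with v hlt hv
    obtain ⟨r, hr, -⟩ := exists_mem_RNFidelities_ge hv c
    exact (csSup_le ⟨r, hr⟩ fun r hr => le_of_mem_RNFidelities hv hr c).trans_lt hlt

end RayleighNormal

theorem stmt14 (μ : ℝ) :
    Filter.Tendsto (fun v => RayleighNormal v μ) (nhdsWithin 0 (Set.Ioi 0))
      (nhds (normalCDF 0 1 μ)) := by
  unfold RayleighNormal
  have h := (tendsto_sSup_RNFidelities μ).pow 2
  rw [Real.sq_sqrt (sub_nonneg.2 (normalCDF_le_one 0 one_pos μ))] at h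
  simpa only [sub_sub_cancel] using tendsto_const_nhds (x := (1 : ℝ)).sub h
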